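/- Let X be a space admitting a closed continuous surjection π : X → ω₁ with all fibers nonempty. Then: (a) if C_i ⊆ X (i ∈ ω) are closed unbounded sets with C_i ⊇ C_{i+1}, then ⋂_i C_i is closed and unbounded; (b) if C ⊆ X is closed and unbounded, then { α < ω₁ : C ∩ π⁻¹({α}) ≠ ∅ } is closed and unbounded in ω₁. -/

import Mathlib

open Set Topology

noncomputable section

universe u

/-- The ordinal ω₁. -/
def omega1 : Ordinal.{0} := (Cardinal.aleph 1).ord

theorem omega1_pos : (0 : Ordinal.{0}) < omega1 := by
  have := Cardinal.ord_lt_ord.mpr (Cardinal.aleph_pos 1)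
  simpa [omega1, Cardinal.ord_zero] using this

theorem omega1_isLimit : Order.IsSuccLimit omega1 := by
  first
  | exact Cardinal.isSuccLimit_ord (Cardinal.aleph0_le_aleph 1)
  | exact Ordinal.isSuccLimit_ord (Cardinal.aleph0_le_aleph 1)

/-- ω₁ as a type (the set of countable ordinals). -/
def W : Type 1 := {a : Ordinal.{0} // a < omega1}

instance : LinearOrder W := by unfold W; infer_instance
instance : TopologicalSpace W := Preorder.topology W
instance : OrderTopology W := ⟨rfl⟩

def w0 : W := ⟨0, omega1_pos⟩
def Wsucc (a : W) : W := ⟨Order.succ a.1, omega1_isLimit.succ_lt a.2⟩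

/-- The closed long ray: ω₁ × [0,1) with the lexicographic order topology. -/
def LongRay : Type 1 := W ×ₗ ↥(Set.Ico (0:ℝ) 1)

instance : LinearOrder LongRay := by unfold LongRay; infer_instance
instance : TopologicalSpace LongRay := Preorder.topology LongRay
instance : OrderTopology LongRay := ⟨rfl⟩

/-- Embedding of ω₁ into the long ray as the points (α, 0). -/
def iW (a : W) : LongRay := toLex (a, ⟨0, le_rfl, one_pos⟩)
def lrZero : LongRay := iW w0

/-- A subset of ω₁ is unbounded. -/
def WUnbounded (S : Set W) : Prop := ∀ a : W, ∃ b ∈ S, a < b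
/-- A subset of ω₁ is closed (in the order sense). -/
def WClosed (S : Set W) : Prop :=
  ∀ a : W, (∃ b, b < a) → (∀ b, b < a → ∃ c ∈ S, b < c ∧ c < a) → a ∈ S
def WClub (S : Set W) : Prop := WClosed S ∧ WUnbounded S
def WStationary (A : Set W) : Prop := ∀ C : Set W, WClub C → (A ∩ C).Nonempty

/-- A Type I space structure on `X`. -/
structure TypeI (X : Type u) [TopologicalSpace X] where
  seq : W → Set X
  isOpen : ∀ a, IsOpen (seq a)
  lindelof : ∀ a, IsLindelof (closure (seq a))
  mono : ∀ a b : W, a < b → closure (seq a) ⊆ seq b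
  covers : ∀ x : X, ∃ a, x ∈ seq a

variable {X : Type u} [TopologicalSpace X]

/-- A subset is bounded if contained in some `X_α`. -/
def TypeI.Bdd (hT : TypeI X) (A : Set X) : Prop := ∃ a, A ⊆ hT.seq a
/-- Club: closed and unbounded. -/
def TypeI.Club (hT : TypeI X) (A : Set X) : Prop := IsClosed A ∧ ¬ hT.Bdd A
/-- A predirection: an unbounded set such that any function unbounded on it is
unbounded on every unbounded subset of it. -/
def TypeI.Predirection (hT : TypeI X) (D : Set X) : Prop :=
  ¬ hT.Bdd D ∧ ∀ f : X → LongRay, Continuous f → ¬ BddAbove (f '' D) →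
    ∀ A ⊆ D, ¬ hT.Bdd A → ¬ BddAbove (f '' A)
/-- A direction: a closed predirection. -/
def TypeI.IsDirection (hT : TypeI X) (D : Set X) : Prop := IsClosed D ∧ hT.Predirection D
/-- The bones. -/
def TypeI.bone (hT : TypeI X) (a : W) : Set X := closure (hT.seq a) \ hT.seq a
/-- The sequence is canonical. -/
def TypeI.Canonical (hT : TypeI X) : Prop :=
  ∀ a : W, Order.IsSuccLimit a.1 → hT.seq a = ⋃ b ∈ {b : W | b < a}, hT.seq b
/-- A slicer. -/
def TypeI.Slicer (hT : TypeI X) (s : X → LongRay) : Prop :=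
  Continuous s ∧ ∀ a : W, ∀ x ∈ closure (hT.seq (Wsucc a)) \ hT.seq a,
    s x ∈ Set.Icc (iW a) (iW (Wsucc a))

/-- ω-bounded: closures of countable sets are compact. -/
def OmegaBounded (X : Type u) [TopologicalSpace X] : Prop :=
  ∀ S : Set X, S.Countable → IsCompact (closure S)
/-- ω₁-compact: no uncountable closed discrete subset. -/
def Omega1Compact (X : Type u) [TopologicalSpace X] : Prop :=
  ∀ C : Set X, IsClosed C → DiscreteTopology C → C.Countable
/-- Countably tight. -/
def CountablyTight (X : Type u) [TopologicalSpace X] : Prop :=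
  ∀ (A : Set X) (x : X), x ∈ closure A → ∃ B ⊆ A, B.Countable ∧ x ∈ closure B

theorem W_lt_iff {a b : W} : a < b ↔ a.1 < b.1 := Iff.rfl
theorem W_le_iff {a b : W} : a ≤ b ↔ a.1 ≤ b.1 := Iff.rfl

theorem lt_Wsucc (a : W) : a < Wsucc a :=
  W_lt_iff.mpr (Order.lt_succ_of_not_isMax (not_isMax _))

theorem W_countable_sup (f : ℕ → W) : ∃ b : W, IsLUB (Set.range f) b := by
  have h : (⨆ n, (f n).1) < omega1 := by
    apply Ordinal.iSup_lt_ord _ (fun n => (f n).2)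
    have : omega1.cof = Cardinal.aleph 1 := Cardinal.isRegular_aleph_one.cof_eq
    rw [this, Cardinal.mk_nat]
    exact Cardinal.aleph0_lt_aleph_one
  refine ⟨⟨_, h⟩, ?_, ?_⟩
  · rintro _ ⟨n, rfl⟩
    exact W_le_iff.mpr (Ordinal.le_iSup _ n)
  · rintro b hb
    exact W_le_iff.mpr (Ordinal.iSup_le fun n => W_le_iff.mp (hb ⟨n, rfl⟩))

theorem stmt_8_part_b {X : Type u} [TopologicalSpace X] (π : X → W)
    (hcl : IsClosedMap π) (C : Set X) (hC : IsClosed C)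
    (hu : ¬ ∃ a : W, ∀ x ∈ C, π x < a) :
    WClub {a : W | (C ∩ π ⁻¹' {a}).Nonempty} := by
  have hset : {a : W | (C ∩ π ⁻¹' {a}).Nonempty} = π '' C := by
    ext a
    constructor
    · rintro ⟨x, hx, hx2⟩
      exact ⟨x, hx, hx2⟩
    · rintro ⟨x, hx, rfl⟩
      exact ⟨x, hx, rfl⟩
  rw [hset]
  have himg : IsClosed (π '' C) := hcl C hC
  push_neg at hu
  constructor
  · intro a ⟨b0, hb0⟩ hlim
    have : a ∈ closure (π '' C) := by
      rw [mem_closure_iff_nhds]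
      intro t ht
      rw [mem_nhds_iff_exists_Ioo_subset' ⟨b0, hb0⟩ ⟨Wsucc a, lt_Wsucc a⟩] at ht
      obtain ⟨l, u, hau, hsub⟩ := ht
      obtain ⟨c, hcS, hlc, hca⟩ := hlim l hau.1
      exact ⟨c, hsub ⟨hlc, hca.trans hau.2⟩, hcS⟩
    rwa [himg.closure_eq] at this
  · intro a
    obtain ⟨x, hx, hx2⟩ := hu (Wsucc a)
    exact ⟨π x, ⟨x, hx, rfl⟩, (lt_Wsucc a).trans_le hx2⟩

/-- Properties of closed preimages of ω₁. -/
theorem stmt_8 {X : Type u} [TopologicalSpace X] [T2Space X] (π : X → W)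
    (hc : Continuous π) (hcl : IsClosedMap π) (hs : Function.Surjective π) :
    (∀ C : ℕ → Set X, (∀ i, IsClosed (C i)) → (∀ i, ¬ ∃ a : W, ∀ x ∈ C i, π x < a) →
        (∀ i, C (i+1) ⊆ C i) →
        IsClosed (⋂ i, C i) ∧ ¬ ∃ a : W, ∀ x ∈ ⋂ i, C i, π x < a) ∧
    (∀ C : Set X, IsClosed C → (¬ ∃ a : W, ∀ x ∈ C, π x < a) →
        WClub {a : W | (C ∩ π ⁻¹' {a}).Nonempty}) := by
  constructor
  · intro C hCcl hu hmono
    have hanti : Antitone C := antitone_nat_of_succ_le hmono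
    refine ⟨isClosed_iInter hCcl, ?_⟩
    rintro ⟨a, ha⟩
    have key : ∀ i, ∀ b : W, ∃ x, x ∈ C i ∧ b ≤ π x := by
      intro i b
      have h := hu i; push_neg at h
      obtain ⟨x, hx1, hx2⟩ := h b
      exact ⟨x, hx1, hx2⟩
    choose g hg1 hg2 using key
    let x : ℕ → X := fun n =>
      Nat.rec (g 0 (Wsucc a)) (fun n xn => g (n+1) (Wsucc (π xn))) n
    have hxC : ∀ n, x n ∈ C n := by
      intro n
      cases n with
      | zero => exact hg1 0 _
      | succ m => exact hg1 (m+1) _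
    have hlt : ∀ n, π (x n) < π (x (n+1)) := fun n =>
      (lt_Wsucc (π (x n))).trans_le (hg2 (n+1) (Wsucc (π (x n))))
    have ha0 : a < π (x 0) := (lt_Wsucc a).trans_le (hg2 0 (Wsucc a))
    obtain ⟨β, hβ⟩ := W_countable_sup (fun n => π (x n))
    have hfβ : ∀ n, π (x n) < β := fun n =>
      (hlt n).trans_le (hβ.1 ⟨n+1, rfl⟩)
    have hβcl : β ∈ closure (Set.range (fun n => π (x n))) :=
      hβ.mem_closure ⟨π (x 0), 0, rfl⟩
    have hrange : Set.range (fun n => π (x n)) = π '' Set.range x :=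
      Set.range_comp π x
    rw [hrange] at hβcl
    have hsub : closure (π '' Set.range x) ⊆ π '' closure (Set.range x) :=
      closure_minimal (Set.image_mono subset_closure) (hcl _ isClosed_closure)
    obtain ⟨y, hy, hπy⟩ := hsub hβcl
    have hyC : ∀ m, y ∈ C m := by
      intro m
      have hdecomp : Set.range x = (x '' Set.Iio m) ∪ (x '' Set.Ici m) := by
        rw [← Set.image_union, Set.Iio_union_Ici, Set.image_univ]
      have hfin : IsClosed (x '' Set.Iio m) :=
        ((Set.finite_Iio m).image x).isClosed
      have hy2 : y ∈ (x '' Set.Iio m) ∪ closure (x '' Set.Ici m) := by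
        have := hy
        rw [hdecomp, closure_union, hfin.closure_eq] at this
        exact this
      have hynot : y ∉ x '' Set.Iio m := by
        rintro ⟨k, _, rfl⟩
        exact absurd hπy (hfβ k).ne
      have hy3 : y ∈ closure (x '' Set.Ici m) := hy2.resolve_left hynot
      have hTsub : x '' Set.Ici m ⊆ C m := by
        rintro _ ⟨n, hn, rfl⟩
        exact hanti hn (hxC n)
      exact closure_minimal hTsub (hCcl m) hy3
    have : π y < a := ha y (Set.mem_iInter.mpr hyC)
    exact absurd (ha0.trans ((hfβ 0).trans_eq hπy.symm)) (asymm this)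
  · intro C hC hu
    exact stmt_8_part_b π hcl C hC hu

end
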